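/- For each fixed z > 0 there exists a constant C > 0 and d_0 such that for d > d_0, 1 − cos^{2d}(z/√d) ≥ C (1 − exp(−2αz²)) for the α of the domination lemma; moreover for z in a bounded interval (0, z_0], 1 − cos^{2d}(z/√d) − d cos^{2d−2}(z/√d) sin²(z/√d) ≤ C z⁴ uniformly in d. -/

import Mathlib

/-!
Lower bound: `cos x ≤ 1 - (2/π²) x²` on `[-π, π]` and `1 + t ≤ exp t` give
`cos² x ≤ exp (-(2/π²) x²)` for `|x| ≤ π/2`, hence `cos^{2d}(z/√d) ≤ exp (-(2/π²) z²)` once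
`z² ≤ d`; the constant `C` is the ratio of the two exponential expressions.

Upper bound: with `u = cos² x`, the quantity `g_d(u) = 1 - u^d - d u^{d-1} (1 - u)` satisfies
`g_{d+1}(u) - g_d(u) = d u^{d-1} (1 - u)² ≤ d (1 - u)²`, so `g_d(u) ≤ d²/2 · (1 - u)²`, and
`1 - u = sin² x ≤ x² = z²/d`.
-/

open Real

lemma one_sub_pow_succ_sub_le {u : ℝ} (hu0 : 0 ≤ u) (hu1 : u ≤ 1) (n : ℕ) :
    1 - u ^ (n + 1) - (n + 1) * u ^ n * (1 - u) ≤ (n + 1) ^ 2 / 2 * (1 - u) ^ 2 := by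
  induction n with
  | zero => norm_num; positivity
  | succ n ih =>
    have hstep : 1 - u ^ (n + 2) - (n + 2) * u ^ (n + 1) * (1 - u)
        = (1 - u ^ (n + 1) - (n + 1) * u ^ n * (1 - u)) + (n + 1) * u ^ n * (1 - u) ^ 2 := by
      ring
    have hincrement : (n + 1 : ℝ) * u ^ n * (1 - u) ^ 2 ≤ (n + 1) * (1 - u) ^ 2 := by
      gcongr
      exact mul_le_of_le_one_right (by positivity) (pow_le_one₀ hu0 hu1)
    push_cast
    rw [show n + 1 + 1 = n + 2 by rfl, show (n : ℝ) + 1 + 1 = n + 2 by ring, hstep]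
    nlinarith [sq_nonneg (1 - u)]

lemma one_sub_cos_pow_sub_le (x : ℝ) (d : ℕ) :
    1 - cos x ^ (2 * d) - d * cos x ^ (2 * d - 2) * sin x ^ 2 ≤ (d : ℝ) ^ 2 / 2 * x ^ 4 := by
  cases d with
  | zero => simp
  | succ n =>
    have hsin : sin x ^ 2 = 1 - cos x ^ 2 := sin_sq x
    have hsin_le : (1 - cos x ^ 2) ^ 2 ≤ (x ^ 2) ^ 2 := by
      rw [← hsin]; exact pow_le_pow_left₀ (sq_nonneg _) sin_sq_le_sq 2
    rw [show 2 * (n + 1) - 2 = 2 * n by omega, pow_mul, pow_mul, hsin]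
    push_cast
    calc 1 - (cos x ^ 2) ^ (n + 1) - (n + 1) * (cos x ^ 2) ^ n * (1 - cos x ^ 2)
        ≤ (n + 1) ^ 2 / 2 * (1 - cos x ^ 2) ^ 2 :=
          one_sub_pow_succ_sub_le (sq_nonneg _) (cos_sq_le_one x) n
      _ ≤ (n + 1) ^ 2 / 2 * x ^ 4 := by rw [← pow_mul] at hsin_le; gcongr

lemma cos_sq_le_exp {x : ℝ} (hx : |x| ≤ π / 2) : cos x ^ 2 ≤ exp (-(2 / π ^ 2 * x ^ 2)) := by
  have hcos_nonneg : 0 ≤ cos x := cos_nonneg_of_mem_Icc (abs_le.mp hx)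
  calc cos x ^ 2 ≤ cos x := by nlinarith [cos_le_one x]
    _ ≤ 1 - 2 / π ^ 2 * x ^ 2 := cos_le_one_sub_mul_cos_sq (by linarith [pi_pos])
    _ ≤ exp (-(2 / π ^ 2 * x ^ 2)) := by linarith [add_one_le_exp (-(2 / π ^ 2 * x ^ 2))]

lemma cos_pow_two_mul_le_exp {x : ℝ} (hx : |x| ≤ π / 2) (n : ℕ) :
    cos x ^ (2 * n) ≤ exp (-(2 / π ^ 2 * (n * x ^ 2))) := by
  calc cos x ^ (2 * n) = (cos x ^ 2) ^ n := pow_mul _ _ _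
    _ ≤ exp (-(2 / π ^ 2 * x ^ 2)) ^ n := by gcongr; exact cos_sq_le_exp hx
    _ = exp (-(2 / π ^ 2 * (n * x ^ 2))) := by rw [← exp_nat_mul]; ring_nf

lemma div_sqrt_sq (z : ℝ) {d : ℝ} (hd : 0 ≤ d) : (z / √d) ^ 2 = z ^ 2 / d := by
  rw [div_pow, sq_sqrt hd]

lemma cos_div_sqrt_pow_le_exp {z : ℝ} {d : ℕ} (hd : 0 < d) (hzd : z ^ 2 ≤ d) :
    cos (z / √d) ^ (2 * d) ≤ exp (-(2 / π ^ 2 * z ^ 2)) := by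
  have hd' : (0 : ℝ) < d := by exact_mod_cast hd
  have hx : |z / √d| ≤ π / 2 := by
    have : (z / √d) ^ 2 ≤ 1 := by rw [div_sqrt_sq z hd'.le, div_le_one hd']; exact hzd
    linarith [(sq_le_one_iff_abs_le_one _).mp this, pi_gt_three]
  convert cos_pow_two_mul_le_exp hx d using 4
  rw [div_sqrt_sq z hd'.le]
  field_simp

/-- Bounds controlling the Kac-Rice variance integrand near `z = 0`: a lower bound for
`1 - cos^{2d}(z/√d)` in terms of the `α` of the domination lemma, and a uniform quartic
upper bound for `1 - c_d(z)² - c_d'(z)²` on bounded intervals. -/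
theorem kostlan_denominator_bounds :
    (∃ α : ℝ, 0 < α ∧ α ≤ 1 / 2 ∧ ∀ z : ℝ, 0 < z →
      ∃ C : ℝ, 0 < C ∧ ∃ d₀ : ℕ, ∀ d : ℕ, d₀ < d →
        C * (1 - Real.exp (-2 * α * z ^ 2)) ≤ 1 - Real.cos (z / Real.sqrt d) ^ (2 * d)) ∧
    (∀ z₀ : ℝ, 0 < z₀ → ∃ C : ℝ, 0 < C ∧ ∀ d : ℕ, 1 ≤ d → ∀ z ∈ Set.Ioc (0 : ℝ) z₀,
      1 - Real.cos (z / Real.sqrt d) ^ (2 * d)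
          - d * Real.cos (z / Real.sqrt d) ^ (2 * d - 2) * Real.sin (z / Real.sqrt d) ^ 2
        ≤ C * z ^ 4) := by
  refine ⟨⟨1 / 2, by norm_num, le_rfl, fun z hz => ?_⟩, fun z₀ _ => ?_⟩
  · have hexp_lt {c : ℝ} (hc : 0 < c) : 0 < 1 - exp (-(c * z ^ 2)) := by
      rw [sub_pos, exp_lt_one_iff, neg_lt_zero]; positivity
    have hnum : 0 < 1 - exp (-(2 / π ^ 2 * z ^ 2)) := hexp_lt (by positivity)
    have hden : 0 < 1 - exp (-2 * (1 / 2) * z ^ 2) := by simpa using hexp_lt one_pos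
    refine ⟨(1 - exp (-(2 / π ^ 2 * z ^ 2))) / (1 - exp (-2 * (1 / 2) * z ^ 2)),
      div_pos hnum hden, ⌈z ^ 2⌉₊, fun d hd => ?_⟩
    rw [div_mul_cancel₀ _ hden.ne']
    have hzd : z ^ 2 ≤ d := (Nat.le_ceil _).trans (by exact_mod_cast hd.le)
    linarith [cos_div_sqrt_pow_le_exp (Nat.zero_lt_of_lt hd) hzd]
  · refine ⟨1 / 2, one_half_pos, fun d hd z _ => ?_⟩
    have hd' : (0 : ℝ) < d := by exact_mod_cast hd
    convert one_sub_cos_pow_sub_le (z / √d) d using 1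
    rw [show (z / √d) ^ 4 = ((z / √d) ^ 2) ^ 2 by ring, div_sqrt_sq z hd'.le]
    field_simp
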